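/- Let x, y ∈ [0,1) with binary digit sequences (x_n), (y_n). Define sequences s, r by: s_n = 1 if exactly one of x_n, y_n equals 1, s_n = x_n otherwise; and r_n = 0 if x_n = 0 and y_n = 1, r_n = y_n otherwise. Then x + y ≡ s + r (mod 1), every 1-position of s is a 1-position of x or of y, and every 1-position of r is a 1-position of y. -/

import Mathlib

open Filter MeasureTheory Set

/-- The `n`-th binary digit of `x ∈ [0,1)` (dyadic rationals get the
terminating expansion, i.e. the one with finitely many `1`'s). -/
noncomputable def digit (x : ℝ) (n : ℕ) : ℕ := (⌊x * 2 ^ n⌋).toNat % 2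

/-- Positions of digit `1` in the binary expansion of `x`. -/
def onesOf (x : ℝ) : Set ℕ := {n : ℕ | digit x n = 1}

/-- `A` contains an `m`-term arithmetic progression. -/
def HasAP (A : Set ℕ) (m : ℕ) : Prop :=
  ∃ a d : ℕ, 1 ≤ d ∧ ∀ t < m, a + t * d ∈ A

/-- `F i`: numbers in `[0,1)` whose binary expansion contains no `i`-term
arithmetic progression of positions of digit `1`. -/
noncomputable def F (i : ℕ) : Set ℝ :=
  {x ∈ Set.Ico (0 : ℝ) 1 | ¬ HasAP (onesOf x) i}

/-- The Erdős set. -/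
noncomputable def E : Set ℝ := ⋃ i, ⋃ (_ : 3 ≤ i), F i

/-- `s_n = 1` if exactly one of `x_n, y_n` equals `1`, and `s_n = x_n` otherwise. -/
noncomputable def sfun (x y : ℝ) (n : ℕ) : ℕ :=
  if digit x n + digit y n = 1 then 1 else digit x n

/-- `r_n = 0` if `x_n = 0` and `y_n = 1`, and `r_n = y_n` otherwise. -/
noncomputable def rfun (x y : ℝ) (n : ℕ) : ℕ :=
  if digit x n = 0 ∧ digit y n = 1 then 0 else digit y n

/-!
Digitwise `s_n + r_n = x_n + y_n`, so the two series add up to `x + y` exactly: the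
congruence modulo `1` is in fact an equality of real numbers.
-/

lemma digit_le_one (x : ℝ) (n : ℕ) : digit x n ≤ 1 :=
  Nat.le_of_lt_succ (Nat.mod_lt _ two_pos)

lemma digit_zero_of_mem_Ico {x : ℝ} (hx : x ∈ Ico (0 : ℝ) 1) : digit x 0 = 0 := by
  simp [digit, Int.floor_eq_zero_iff.2 hx]

lemma digit_succ_eq_val_digits (x : ℝ) (n : ℕ) :
    digit x (n + 1) = (Real.digits x 2 n : ℕ) := by
  simp [digit, Real.digits, Int.floor_toNat]

lemma hasSum_digit_div_two_pow {x : ℝ} (hx : x ∈ Ico (0 : ℝ) 1) :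
    HasSum (fun n => (digit x n : ℝ) / 2 ^ n) x := by
  have hterm :
      (fun n => (digit x (n + 1) : ℝ) / 2 ^ (n + 1)) = Real.ofDigitsTerm (x.digits 2) := by
    funext n
    simp [Real.ofDigitsTerm, digit_succ_eq_val_digits, div_eq_mul_inv]
  rw [← hasSum_nat_add_iff' 1, hterm]
  simpa [digit_zero_of_mem_Ico hx] using Real.hasSum_ofDigitsTerm_digits x one_lt_two hx

lemma tsum_add_tsum_eq_of_hasSum_add {ι : Type*} {f g : ι → ℝ} {a : ℝ}
    (hf : 0 ≤ f) (hg : 0 ≤ g) (h : HasSum (f + g) a) : ∑' i, f i + ∑' i, g i = a := by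
  have hsf : Summable f := .of_nonneg_of_le hf (fun i => le_add_of_nonneg_right (hg i)) h.summable
  have hsg : Summable g := .of_nonneg_of_le hg (fun i => le_add_of_nonneg_left (hf i)) h.summable
  rw [← hsf.tsum_add hsg]
  exact h.tsum_eq

lemma sfun_add_rfun (x y : ℝ) (n : ℕ) :
    sfun x y n + rfun x y n = digit x n + digit y n := by
  have := digit_le_one x n
  have := digit_le_one y n
  unfold sfun rfun
  split_ifs <;> omega

lemma digit_eq_one_or_of_sfun_eq_one {x y : ℝ} {n : ℕ} (h : sfun x y n = 1) :
    digit x n = 1 ∨ digit y n = 1 := by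
  unfold sfun at h
  split_ifs at h <;> omega

lemma digit_eq_one_of_rfun_eq_one {x y : ℝ} {n : ℕ} (h : rfun x y n = 1) : digit y n = 1 := by
  unfold rfun at h
  split_ifs at h
  exact h

theorem stmt18 (x y : ℝ) (hx : x ∈ Set.Ico (0 : ℝ) 1) (hy : y ∈ Set.Ico (0 : ℝ) 1) :
    Int.fract (x + y) =
      Int.fract ((∑' n : ℕ, (sfun x y n : ℝ) / 2 ^ n) + ∑' n : ℕ, (rfun x y n : ℝ) / 2 ^ n) ∧
    (∀ n : ℕ, sfun x y n = 1 → digit x n = 1 ∨ digit y n = 1) ∧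
    (∀ n : ℕ, rfun x y n = 1 → digit y n = 1) := by
  have hsum :
      HasSum (fun n => (sfun x y n : ℝ) / 2 ^ n + (rfun x y n : ℝ) / 2 ^ n) (x + y) := by
    convert (hasSum_digit_div_two_pow hx).add (hasSum_digit_div_two_pow hy) using 2 with n
    rw [← add_div, ← add_div, ← Nat.cast_add, ← Nat.cast_add, sfun_add_rfun]
  refine ⟨?_, fun _ => digit_eq_one_or_of_sfun_eq_one, fun _ => digit_eq_one_of_rfun_eq_one⟩
  rw [tsum_add_tsum_eq_of_hasSum_add (fun _ => by positivity) (fun _ => by positivity) hsum]
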